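/- Let q ≡ 1 (mod 4) be a prime power with q ≥ 17, let L = PSL(2,q), X its involution class, t = diag(ι,-ι) with ι² = -1, and A = Aut(C(L,X)). Then the stabilizer A_t acts faithfully on the second disc Δ_2(t): any graph automorphism fixing t and fixing every vertex of Δ_2(t) pointwise is the identity. -/

import Mathlib

/-!
Fix `ι` with `ι² = -1`. The linear map `traceless ι : u ↦ !![ι u₀, ι u₁ - u₂; ι u₁ + u₂, -ι u₀]`
identifies `F³` with the traceless `2 × 2` matrices, with `det (traceless ι u) = u ⬝ᵥ u` and
`M N + N M = -2 (u ⬝ᵥ w) • 1` for `M = traceless ι u`, `N = traceless ι w`. Hence the involutions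
of `PSL(2, F)` are the unit vectors of `F³` up to sign, two of them commute iff the vectors are
orthogonal, and `t` is `e₀ = (1, 0, 0)`.

Two non-parallel vectors have a one-dimensional orthogonal complement, spanned by their cross
product, so the graph has no 4-cycles and an automorphism fixing two distinct neighbours of a
vertex fixes the vertex. A unit vector `w` with `w₀ ≠ 0` and `1 - w₀²` a nonzero square is at
distance 2 from `e₀`, and for `q > 9` there are two such first coordinates `x₁ ≠ ±x₂`. The
vertices orthogonal to `e₀` and the isotropic vertices `(±1, n)`, `n ⬝ᵥ n = 0`, have neighbours
with any such prescribed first coordinate, so they are fixed; every other vertex `v ≠ t` is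
orthogonal to two distinct isotropic vertices `(1, c, ± c ι)`.
-/

open Matrix
open scoped MatrixGroups

/-- The commuting involution graph of a group, on the set of all involutions. -/
def commGraph (G : Type*) [Group G] : SimpleGraph {x : G // x * x = 1 ∧ x ≠ 1} where
  Adj x y := x ≠ y ∧ (x : G) * y = (y : G) * x
  symm := ⟨fun x y h => ⟨h.1.symm, h.2.symm⟩⟩
  loopless := ⟨fun x h => h.1 rfl⟩

/-- The automorphism group of a simple graph, as a subgroup of the permutations of vertices. -/
def graphAut {V : Type*} (G : SimpleGraph V) : Subgroup (Equiv.Perm V) where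
  carrier := {e | ∀ x y, G.Adj (e x) (e y) ↔ G.Adj x y}
  one_mem' := by intro x y; simp
  mul_mem' := by
    intro a b ha hb x y
    simp only [Equiv.Perm.mul_apply]
    exact (ha _ _).trans (hb x y)
  inv_mem' := by
    intro a ha x y
    simpa using (ha (a⁻¹ x) (a⁻¹ y)).symm

namespace SimpleGraph

variable {V : Type*} {G : SimpleGraph V}

lemma dist_eq_two_of_adj_of_adj {u v w : V} (hne : u ≠ w) (hnadj : ¬G.Adj u w)
    (huv : G.Adj u v) (hvw : G.Adj v w) : G.dist u w = 2 := by
  have h := edist_eq_two_iff.mpr ⟨hne, hnadj, ⟨v, huv, hvw.symm⟩⟩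
  rw [← (huv.reachable.trans hvw.reachable).coe_dist_eq_edist] at h
  exact_mod_cast h

end SimpleGraph

lemma apply_eq_self_of_adj_of_adj {V : Type*} {G : SimpleGraph V}
    (hG : ∀ ⦃v v' w w' : V⦄, G.Adj v w → G.Adj v w' → G.Adj v' w → G.Adj v' w' →
      v = v' ∨ w = w')
    {a : Equiv.Perm V} (ha : a ∈ graphAut G) {v w w' : V} (hww' : w ≠ w')
    (hw : G.Adj v w) (hw' : G.Adj v w') (haw : a w = w) (haw' : a w' = w') : a v = v := by
  have h₁ : G.Adj (a v) w := haw ▸ (ha v w).2 hw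
  have h₂ : G.Adj (a v) w' := haw' ▸ (ha v w').2 hw'
  exact ((hG h₁ h₂ hw hw').resolve_right hww')

section Orthogonality

variable {F : Type*} [Field F]

lemma exists_eq_smul_of_cross_eq_zero {u p : Fin 3 → F} (hp : p ≠ 0) (h : u ⨯₃ p = 0) :
    ∃ s : F, u = s • p := by
  have hdep : ¬LinearIndependent F ![p, u] := by
    rw [← crossProduct_ne_zero_iff_linearIndependent, not_not, ← cross_anticomm, h, neg_zero]
  simpa [LinearIndependent.pair_iff' hp, eq_comm] using hdep

lemma eq_or_eq_neg_of_eq_smul {n : Type*} [Fintype n] {u w : n → F} (hu : u ⬝ᵥ u = 1)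
    (hw : w ⬝ᵥ w = 1) {s : F} (h : w = s • u) : u = w ∨ u = -w := by
  have hs : s * s = 1 := by
    rwa [h, smul_dotProduct, dotProduct_smul, hu, smul_eq_mul, smul_eq_mul, mul_one] at hw
  rcases mul_self_eq_one_iff.mp hs with rfl | rfl <;> simp [h]

lemma eq_or_eq_neg_of_orthogonal {u u' w w' : Fin 3 → F} (hu : u ⬝ᵥ u = 1)
    (hu' : u' ⬝ᵥ u' = 1) (hw : w ⬝ᵥ w = 1) (hw' : w' ⬝ᵥ w' = 1)
    (h₁ : u ⬝ᵥ w = 0) (h₂ : u ⬝ᵥ w' = 0) (h₃ : u' ⬝ᵥ w = 0) (h₄ : u' ⬝ᵥ w' = 0) :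
    (u = u' ∨ u = -u') ∨ (w = w' ∨ w = -w') := by
  have ne_zero : ∀ {x : Fin 3 → F}, x ⬝ᵥ x = 1 → x ≠ 0 := by
    rintro x hx rfl; simp at hx
  by_cases hp : u ⨯₃ u' = 0
  · obtain ⟨s, hs⟩ := exists_eq_smul_of_cross_eq_zero (ne_zero hu)
      (by rw [← cross_anticomm, hp, neg_zero])
    exact Or.inl (eq_or_eq_neg_of_eq_smul hu hu' hs)
  · -- `w` and `w'` both lie on the line orthogonal to `u` and `u'`, spanned by `u ⨯₃ u'`.
    have on_line : ∀ x, u ⬝ᵥ x = 0 → u' ⬝ᵥ x = 0 → ∃ s : F, x = s • u ⨯₃ u' :=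
      fun x hx hx' ↦ exists_eq_smul_of_cross_eq_zero hp <| by
        rw [cross_cross_eq_smul_sub_smul', dotProduct_comm x, hx, hx', zero_smul, zero_smul,
          sub_zero]
    obtain ⟨s, hs⟩ := on_line w h₁ h₃
    obtain ⟨s', hs'⟩ := on_line w' h₂ h₄
    have hs0 : s ≠ 0 := by rintro rfl; exact ne_zero hw (by simp [hs])
    refine Or.inr (eq_or_eq_neg_of_eq_smul hw hw' (s := s' / s) ?_)
    rw [hs, hs', smul_smul, div_mul_cancel₀ _ hs0]

lemma dotProduct_vec3 (u : Fin 3 → F) (a b c : F) :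
    u ⬝ᵥ ![a, b, c] = u 0 * a + u 1 * b + u 2 * c := by
  rw [vec3_dotProduct]
  rfl

lemma e₀_dotProduct_e₀ : (![1, 0, 0] : Fin 3 → F) ⬝ᵥ ![1, 0, 0] = 1 := by simp

end Orthogonality

section Traceless

variable {F : Type*} [Field F] {ι : F}

lemma ne_zero_of_sq_eq_neg_one (hι : ι ^ 2 = -1) : ι ≠ 0 := by
  rintro rfl
  simp at hι

variable (ι) in
def traceless : (Fin 3 → F) →ₗ[F] Matrix (Fin 2) (Fin 2) F where
  toFun u := !![ι * u 0, ι * u 1 - u 2; ι * u 1 + u 2, -(ι * u 0)]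
  map_add' u w := by ext i j; fin_cases i <;> fin_cases j <;> simp <;> ring
  map_smul' s u := by ext i j; fin_cases i <;> fin_cases j <;> simp <;> ring

lemma traceless_apply (u : Fin 3 → F) :
    traceless ι u = !![ι * u 0, ι * u 1 - u 2; ι * u 1 + u 2, -(ι * u 0)] := rfl

lemma det_traceless (hι : ι ^ 2 = -1) (u : Fin 3 → F) : (traceless ι u).det = u ⬝ᵥ u := by
  rw [traceless_apply, det_fin_two_of, vec3_dotProduct]
  linear_combination (-(u 0 * u 0) - u 1 * u 1) * hι

lemma traceless_mul_self (hι : ι ^ 2 = -1) (u : Fin 3 → F) :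
    traceless ι u * traceless ι u = -(u ⬝ᵥ u) • 1 := by
  ext i j; fin_cases i <;> fin_cases j <;>
    simp [traceless_apply, mul_apply, vec3_dotProduct] <;>
    first | linear_combination (u 0 * u 0 + u 1 * u 1) * hι | ring

lemma traceless_mul_add_mul_swap (hι : ι ^ 2 = -1) (u w : Fin 3 → F) :
    traceless ι u * traceless ι w + traceless ι w * traceless ι u = (-2 * (u ⬝ᵥ w)) • 1 := by
  ext i j; fin_cases i <;> fin_cases j <;>
    simp [traceless_apply, vec3_dotProduct] <;>
    first | linear_combination 2 * (u 0 * w 0 + u 1 * w 1) * hι | ring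

lemma traceless_injective [NeZero (2 : F)] (hι : ι ≠ 0) : Function.Injective (traceless ι) := by
  intro u w h
  have h₀₀ := congrFun₂ h 0 0
  have h₀₁ := congrFun₂ h 0 1
  have h₁₀ := congrFun₂ h 1 0
  simp only [traceless_apply, of_apply, cons_val', cons_val_zero, cons_val_one, empty_val',
    cons_val_fin_one] at h₀₀ h₀₁ h₁₀
  ext i; fin_cases i
  · exact mul_left_cancel₀ hι h₀₀
  · exact mul_left_cancel₀ (mul_ne_zero (two_ne_zero (α := F)) hι)
      (show 2 * ι * u 1 = 2 * ι * w 1 by linear_combination h₀₁ + h₁₀)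
  · exact mul_left_cancel₀ (two_ne_zero (α := F))
      (show 2 * u 2 = 2 * w 2 by linear_combination h₁₀ - h₀₁)

lemma exists_traceless_eq [NeZero (2 : F)] (hι : ι ≠ 0) {A : Matrix (Fin 2) (Fin 2) F}
    (hA : A.trace = 0) : ∃ u, traceless ι u = A := by
  have h₁₁ : A 1 1 = -A 0 0 := by rw [trace_fin_two] at hA; linear_combination hA
  refine ⟨![A 0 0 / ι, (A 0 1 + A 1 0) / (2 * ι), (A 1 0 - A 0 1) / 2], ?_⟩
  ext i j; fin_cases i <;> fin_cases j <;> simp [traceless_apply, h₁₁] <;> field_simp <;> ring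

end Traceless

abbrev Involution (G : Type*) [Group G] := {x : G // x * x = 1 ∧ x ≠ 1}

section PSL

variable {F : Type*} [Field F]

local notation "M₂" => Matrix (Fin 2) (Fin 2) F

lemma coe_psl_eq_coe_psl_iff {S T : SL(2, F)} :
    (S : PSL(2, F)) = T ↔ (S : M₂) = T ∨ (S : M₂) = -T := by
  rw [QuotientGroup.eq, Matrix.SpecialLinearGroup.mem_center_iff, Fintype.card_fin]
  constructor
  · rintro ⟨r, hr, hrS⟩
    have hT : (T : M₂) = S * ((S⁻¹ * T : SL(2, F)) : M₂) := by
      rw [← Matrix.SpecialLinearGroup.coe_mul, mul_inv_cancel_left]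
    rw [← hrS, scalar_apply, ← smul_eq_mul_diagonal] at hT
    rcases sq_eq_one_iff.mp hr with rfl | rfl
    · exact Or.inl (by simpa using hT.symm)
    · exact Or.inr (by simp [hT])
  · rintro (h | h)
    · exact ⟨1, one_pow 2, by simp [Matrix.SpecialLinearGroup.coe_mul, ← h, adjugate_mul]⟩
    · exact ⟨-1, by norm_num, by
        rw [map_neg, map_one]
        simp [Matrix.SpecialLinearGroup.coe_mul, (neg_eq_iff_eq_neg.mpr h).symm, adjugate_mul]⟩

end PSL

lemma mul_self_eq_trace_smul_sub_det_smul {R : Type*} [CommRing R]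
    (A : Matrix (Fin 2) (Fin 2) R) : A * A = A.trace • A - A.det • 1 := by
  ext i j; fin_cases i <;> fin_cases j <;>
    simp [mul_apply, trace_fin_two, det_fin_two] <;> ring

section Vertex

variable {F : Type*} [Field F] {ι : F} (hι : ι ^ 2 = -1)

local notation "M₂" => Matrix (Fin 2) (Fin 2) F

def slOfUnit {u : Fin 3 → F} (hu : u ⬝ᵥ u = 1) : SL(2, F) :=
  ⟨traceless ι u, by rw [det_traceless hι, hu]⟩

@[simp]
lemma coe_slOfUnit {u : Fin 3 → F} (hu : u ⬝ᵥ u = 1) : (slOfUnit hι hu : M₂) = traceless ι u :=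
  rfl

lemma slOfUnit_mem_involution [NeZero (2 : F)] {u : Fin 3 → F} (hu : u ⬝ᵥ u = 1) :
    (slOfUnit hι hu : PSL(2, F)) * slOfUnit hι hu = 1 ∧ (slOfUnit hι hu : PSL(2, F)) ≠ 1 := by
  have hsq : (slOfUnit hι hu : M₂) * slOfUnit hι hu = -1 := by
    rw [coe_slOfUnit, traceless_mul_self hι, hu, neg_smul, one_smul]
  rw [← QuotientGroup.mk_mul, ← QuotientGroup.mk_one, Ne, coe_psl_eq_coe_psl_iff,
    coe_psl_eq_coe_psl_iff, Matrix.SpecialLinearGroup.coe_mul, hsq]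
  refine ⟨Or.inr (by simp), fun h ↦ two_ne_zero (α := F) ?_⟩
  have h₀₀ : (1 : F) = -1 := by
    rcases h with h | h <;> rw [h] at hsq <;> simpa using congrFun₂ hsq 0 0
  linear_combination h₀₀

def vertex [NeZero (2 : F)] {u : Fin 3 → F} (hu : u ⬝ᵥ u = 1) : Involution PSL(2, F) :=
  ⟨slOfUnit hι hu, slOfUnit_mem_involution hι hu⟩

lemma vertex_eq_vertex_iff [NeZero (2 : F)] {u w : Fin 3 → F} (hu : u ⬝ᵥ u = 1)
    (hw : w ⬝ᵥ w = 1) :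
    vertex hι hu = vertex hι hw ↔ u = w ∨ u = -w := by
  rw [vertex, vertex, Subtype.mk.injEq, coe_psl_eq_coe_psl_iff, coe_slOfUnit, coe_slOfUnit,
    ← map_neg, (traceless_injective (ne_zero_of_sq_eq_neg_one hι)).eq_iff,
    (traceless_injective (ne_zero_of_sq_eq_neg_one hι)).eq_iff]

lemma exists_vertex_eq [NeZero (2 : F)] (v : Involution PSL(2, F)) :
    ∃ u, ∃ hu : u ⬝ᵥ u = 1, v = vertex hι hu := by
  obtain ⟨x, hx, hx1⟩ := v
  obtain ⟨S, rfl⟩ := QuotientGroup.mk_surjective x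
  have hS := mul_self_eq_trace_smul_sub_det_smul (S : M₂)
  rw [S.det_coe, one_smul] at hS
  rw [← QuotientGroup.mk_mul, ← QuotientGroup.mk_one, coe_psl_eq_coe_psl_iff,
    Matrix.SpecialLinearGroup.coe_mul, Matrix.SpecialLinearGroup.coe_one] at hx
  have htr : (S : M₂).trace = 0 := by
    rcases hx with h | h
    · -- `S * S = 1` would make `S` a scalar matrix, i.e. trivial in `PSL(2, F)`
      have hc : (S : M₂).trace • (S : M₂) = (2 : F) • 1 := by
        rw [two_smul, ← sub_eq_iff_eq_add.mp (hS.symm.trans h)]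
      have htr0 : (S : M₂).trace ≠ 0 := by
        intro h0
        rw [h0, zero_smul] at hc
        have h₀₀ := congrFun₂ hc 0 0
        simp only [Matrix.smul_apply, one_apply_eq, smul_eq_mul, mul_one, Matrix.zero_apply]
          at h₀₀
        exact two_ne_zero h₀₀.symm
      obtain ⟨c, hscalar⟩ : ∃ c : F, (S : M₂) = c • 1 :=
        ⟨(S : M₂).trace⁻¹ * 2, by
          rw [mul_smul, ← hc, smul_smul, inv_mul_cancel₀ htr0, one_smul]⟩
      refine absurd ((QuotientGroup.eq_one_iff S).mpr
        (Subgroup.mem_center_iff.mpr fun g ↦ Subtype.ext ?_)) hx1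
      simp [Matrix.SpecialLinearGroup.coe_mul, hscalar]
    · by_contra hc
      have h0 : (S : M₂) = 0 :=
        (smul_eq_zero.mp (by simpa using hS.symm.trans h)).resolve_left hc
      simpa [h0] using S.det_coe
  obtain ⟨u, hu⟩ := exists_traceless_eq (ne_zero_of_sq_eq_neg_one hι) htr
  have hdet : u ⬝ᵥ u = 1 := by rw [← det_traceless hι, hu, S.det_coe]
  refine ⟨u, hdet, Subtype.ext ?_⟩
  show (S : PSL(2, F)) = slOfUnit hι hdet
  rw [show S = slOfUnit hι hdet from Subtype.ext hu.symm]

lemma vertex_adj_vertex_iff [NeZero (2 : F)] {u w : Fin 3 → F} (hu : u ⬝ᵥ u = 1)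
    (hw : w ⬝ᵥ w = 1) :
    (commGraph PSL(2, F)).Adj (vertex hι hu) (vertex hι hw) ↔ u ⬝ᵥ w = 0 := by
  change vertex hι hu ≠ vertex hι hw ∧
      ((slOfUnit hι hu * slOfUnit hι hw : SL(2, F)) : PSL(2, F)) =
        ((slOfUnit hι hw * slOfUnit hι hu : SL(2, F)) : PSL(2, F)) ↔ _
  rw [coe_psl_eq_coe_psl_iff, Matrix.SpecialLinearGroup.coe_mul,
    Matrix.SpecialLinearGroup.coe_mul, coe_slOfUnit, coe_slOfUnit, Ne, vertex_eq_vertex_iff hι]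
  have hanti := traceless_mul_add_mul_swap hι u w
  set P := traceless ι u
  set Q := traceless ι w
  constructor
  · rintro ⟨hne, hcomm | hanticomm⟩
    · -- commuting square roots of `-1` are proportional, hence `w = ± u`
      refine absurd (eq_or_eq_neg_of_eq_smul hu hw (s := u ⬝ᵥ w) ?_) hne
      have hPQ : P * Q = -(u ⬝ᵥ w) • 1 := by
        have h2 : (2 : F) • (P * Q) = (2 : F) • (-(u ⬝ᵥ w) • (1 : M₂)) := by
          rw [two_smul, smul_smul]
          nth_rw 2 [hcomm]
          rw [hanti]
          ring_nf
        exact smul_right_injective M₂ two_ne_zero h2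
      have hPP : P * P = -1 := by rw [traceless_mul_self hι, hu, neg_smul, one_smul]
      apply traceless_injective (ne_zero_of_sq_eq_neg_one hι)
      calc Q = -((P * P) * Q) := by rw [hPP]; simp
        _ = -(P * (P * Q)) := by rw [mul_assoc]
        _ = traceless ι ((u ⬝ᵥ w) • u) := by rw [hPQ, map_smul]; simp [P]
    · rw [hanticomm, neg_add_cancel] at hanti
      simpa [two_ne_zero (α := F)] using congrFun₂ hanti 0 0
  · intro h
    refine ⟨?_, Or.inr (eq_neg_of_add_eq_zero_left (by rw [hanti, h]; simp))⟩
    rintro (rfl | rfl) <;> simp_all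

end Vertex

section Graph

variable {F : Type*} [Field F] {ι : F}

lemma commGraph_psl_eq_or_eq_of_adj [NeZero (2 : F)] (hι : ι ^ 2 = -1)
    ⦃v v' w w' : Involution PSL(2, F)⦄
    (h₁ : (commGraph PSL(2, F)).Adj v w) (h₂ : (commGraph PSL(2, F)).Adj v w')
    (h₃ : (commGraph PSL(2, F)).Adj v' w) (h₄ : (commGraph PSL(2, F)).Adj v' w') :
    v = v' ∨ w = w' := by
  obtain ⟨u, hu, rfl⟩ := exists_vertex_eq hι v
  obtain ⟨u', hu', rfl⟩ := exists_vertex_eq hι v'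
  obtain ⟨x, hx, rfl⟩ := exists_vertex_eq hι w
  obtain ⟨x', hx', rfl⟩ := exists_vertex_eq hι w'
  rw [vertex_adj_vertex_iff] at h₁ h₂ h₃ h₄
  rw [vertex_eq_vertex_iff, vertex_eq_vertex_iff]
  exact eq_or_eq_neg_of_orthogonal hu hu' hx hx' h₁ h₂ h₃ h₄

lemma traceless_e₀ : traceless ι ![1, 0, 0] = !![ι, 0; 0, -ι] := by
  ext i j; fin_cases i <;> fin_cases j <;> simp [traceless_apply]

def vertexT [NeZero (2 : F)] (hι : ι ^ 2 = -1) : Involution PSL(2, F) := vertex hι e₀_dotProduct_e₀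

lemma dist_vertexT_eq_two [NeZero (2 : F)] (hι : ι ^ 2 = -1) {u : Fin 3 → F}
    (hu : u ⬝ᵥ u = 1) {k : F} (hu₀ : u 0 ≠ 0) (hk : k ≠ 0) (hk' : u 0 * u 0 + k * k = 1) :
    (commGraph PSL(2, F)).dist (vertexT hι) (vertex hι hu) = 2 := by
  have hw : ![0, -(u 2 / k), u 1 / k] ⬝ᵥ ![0, -(u 2 / k), u 1 / k] = 1 := by
    rw [vec3_dotProduct] at hu
    rw [vec3_dotProduct']
    field_simp
    linear_combination hu - hk'
  refine SimpleGraph.dist_eq_two_of_adj_of_adj (v := vertex hι hw) ?_ ?_ ?_ ?_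
  · rw [vertexT, Ne, vertex_eq_vertex_iff]
    intro h
    obtain rfl | rfl : u = ![1, 0, 0] ∨ u = -![1, 0, 0] := by
      rcases h with h | h
      exacts [Or.inl h.symm, Or.inr (by rw [h, neg_neg])]
    all_goals exact hk (mul_self_eq_zero.mp (by simpa using hk'))
  · rw [vertexT, vertex_adj_vertex_iff, vec3_dotProduct]
    simpa using hu₀
  · rw [vertexT, vertex_adj_vertex_iff, vec3_dotProduct']
    ring
  · rw [vertex_adj_vertex_iff, dotProduct_comm, dotProduct_vec3]
    ring

lemma vertex_eq_vertexT [NeZero (2 : F)] (hι : ι ^ 2 = -1) {v : Fin 3 → F} (hv : v ⬝ᵥ v = 1)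
    (hv₁ : v 1 = 0) (hv₂ : v 2 = 0) : vertex hι hv = vertexT hι := by
  have hv₀ : v 0 * v 0 = 1 := by simpa [vec3_dotProduct, hv₁, hv₂] using hv
  rw [vertexT, vertex_eq_vertex_iff]
  rcases mul_self_eq_one_iff.mp hv₀ with h | h
  · exact Or.inl (by ext i; fin_cases i <;> simp [h, hv₁, hv₂])
  · exact Or.inr (by ext i; fin_cases i <;> simp [h, hv₁, hv₂])

end Graph

lemma List.exists_notMem_of_length_lt {α : Type*} [Fintype α] [DecidableEq α] (l : List α)
    (h : l.length < Fintype.card α) : ∃ m, m ∉ l := by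
  obtain ⟨m, -, hm⟩ := Finset.exists_mem_notMem_of_card_lt_card
    (s := l.toFinset) (t := Finset.univ) ((List.toFinset_card_le l).trans_lt h)
  exact ⟨m, by simpa using hm⟩

section Circle

variable {F : Type*} [Field F] [NeZero (2 : F)] {ι : F}

lemma circle_point_of_notMem (hι : ι ^ 2 = -1) {m : F} (hm : m ∉ [0, 1, -1, ι, -ι]) :
    (m + m⁻¹) / 2 * ((m + m⁻¹) / 2) + ι * (m - m⁻¹) / 2 * (ι * (m - m⁻¹) / 2) = 1 ∧
      (m + m⁻¹) / 2 ≠ 0 ∧ ι * (m - m⁻¹) / 2 ≠ 0 := by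
  simp only [List.mem_cons, List.not_mem_nil, or_false, not_or] at hm
  obtain ⟨hm0, hm1, hm1', hmι, hmι'⟩ := hm
  refine ⟨?_, div_ne_zero (fun h ↦ ?_) two_ne_zero, div_ne_zero
    (mul_ne_zero (ne_zero_of_sq_eq_neg_one hι) (sub_ne_zero.mpr fun h ↦ ?_)) two_ne_zero⟩
  · field_simp
    linear_combination (m ^ 2 - 1) ^ 2 * hι
  · have : (m - ι) * (m + ι) = 0 := by field_simp at h; linear_combination h - hι
    rcases mul_eq_zero.mp this with h' | h'
    exacts [hmι (sub_eq_zero.mp h'), hmι' (eq_neg_of_add_eq_zero_left h')]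
  · have : m * m = 1 := by nth_rw 2 [h]; exact mul_inv_cancel₀ hm0
    rcases mul_self_eq_one_iff.mp this with h' | h'
    exacts [hm1 h', hm1' h']

lemma exists_two_circle_points [Fintype F] (hι : ι ^ 2 = -1) (hF : 9 < Fintype.card F) :
    ∃ x₁ x₂ k₁ k₂ : F, x₁ * x₁ + k₁ * k₁ = 1 ∧ x₂ * x₂ + k₂ * k₂ = 1 ∧
      x₁ ≠ 0 ∧ x₂ ≠ 0 ∧ k₁ ≠ 0 ∧ k₂ ≠ 0 ∧ x₁ ≠ x₂ ∧ x₁ ≠ -x₂ := by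
  classical
  obtain ⟨m₁, hm₁⟩ := List.exists_notMem_of_length_lt [0, 1, -1, ι, -ι]
    (show 5 < Fintype.card F by omega)
  obtain ⟨m₂, hm₂⟩ := List.exists_notMem_of_length_lt
    [0, 1, -1, ι, -ι, m₁, -m₁, m₁⁻¹, -m₁⁻¹] (show 9 < Fintype.card F from hF)
  have hm₂' : m₂ ∉ [0, 1, -1, ι, -ι] := fun h ↦ hm₂ (by simp_all)
  simp only [List.mem_cons, List.not_mem_nil, or_false, not_or] at hm₂
  obtain ⟨hm₂0, -, -, -, -, hm₂₁, hm₂₁', hm₂₁i, hm₂₁i'⟩ := hm₂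
  have hm₁0 : m₁ ≠ 0 := fun h ↦ hm₁ (by simp [h])
  obtain ⟨hc₁, hx₁, hk₁⟩ := circle_point_of_notMem hι hm₁
  obtain ⟨hc₂, hx₂, hk₂⟩ := circle_point_of_notMem hι hm₂'
  refine ⟨_, _, _, _, hc₁, hc₂, hx₁, hx₂, hk₁, hk₂, fun h ↦ ?_, fun h ↦ ?_⟩
  · have : (m₁ - m₂) * (m₁ * m₂ - 1) = 0 := by field_simp at h; linear_combination h
    rcases mul_eq_zero.mp this with h' | h'
    · exact hm₂₁ (sub_eq_zero.mp h').symm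
    · exact hm₂₁i (eq_inv_of_mul_eq_one_right (sub_eq_zero.mp h'))
  · have : (m₁ + m₂) * (m₁ * m₂ + 1) = 0 := by field_simp at h; linear_combination h
    rcases mul_eq_zero.mp this with h' | h'
    · exact hm₂₁' (eq_neg_of_add_eq_zero_right h')
    · exact hm₂₁i' (neg_eq_iff_eq_neg.mp
        (eq_inv_of_mul_eq_one_right (by linear_combination -h')))

end Circle

section Automorphism

variable {F : Type*} [Field F] [Fintype F] [NeZero (2 : F)] {ι : F}

lemma apply_vertex_eq_self_of_forall_exists_adj (hι : ι ^ 2 = -1) (hF : 9 < Fintype.card F)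
    {a : Equiv.Perm (Involution PSL(2, F))} (ha : a ∈ graphAut (commGraph PSL(2, F)))
    (hfix : ∀ v, (commGraph PSL(2, F)).dist (vertexT hι) v = 2 → a v = v)
    {v : Fin 3 → F} (hv : v ⬝ᵥ v = 1)
    (h : ∀ x k : F, x * x + k * k = 1 → x ≠ 0 → k ≠ 0 →
      ∃ w, w ⬝ᵥ w = 1 ∧ w 0 = x ∧ v ⬝ᵥ w = 0) :
    a (vertex hι hv) = vertex hι hv := by
  obtain ⟨x₁, x₂, k₁, k₂, hc₁, hc₂, hx₁, hx₂, hk₁, hk₂, hne, hne'⟩ :=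
    exists_two_circle_points hι hF
  obtain ⟨w₁, hw₁, rfl, hvw₁⟩ := h x₁ k₁ hc₁ hx₁ hk₁
  obtain ⟨w₂, hw₂, rfl, hvw₂⟩ := h x₂ k₂ hc₂ hx₂ hk₂
  refine apply_eq_self_of_adj_of_adj (commGraph_psl_eq_or_eq_of_adj hι) ha
    (w := vertex hι hw₁) (w' := vertex hι hw₂) ?_ ((vertex_adj_vertex_iff hι hv hw₁).mpr hvw₁)
    ((vertex_adj_vertex_iff hι hv hw₂).mpr hvw₂) (hfix _ (dist_vertexT_eq_two hι hw₁ hx₁ hk₁ hc₁))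
    (hfix _ (dist_vertexT_eq_two hι hw₂ hx₂ hk₂ hc₂))
  rw [Ne, vertex_eq_vertex_iff]
  rintro (rfl | rfl)
  exacts [hne rfl, hne' rfl]

lemma apply_vertex_eq_self_of_apply_zero_eq_zero (hι : ι ^ 2 = -1) (hF : 9 < Fintype.card F)
    {a : Equiv.Perm (Involution PSL(2, F))} (ha : a ∈ graphAut (commGraph PSL(2, F)))
    (hfix : ∀ v, (commGraph PSL(2, F)).dist (vertexT hι) v = 2 → a v = v)
    {v : Fin 3 → F} (hv : v ⬝ᵥ v = 1) (hv₀ : v 0 = 0) :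
    a (vertex hι hv) = vertex hι hv := by
  refine apply_vertex_eq_self_of_forall_exists_adj hι hF ha hfix hv fun x k hxk _ _ ↦ ?_
  rw [vec3_dotProduct, hv₀] at hv
  refine ⟨![x, -(k * v 2), k * v 1], ?_, rfl, ?_⟩
  · rw [vec3_dotProduct']
    linear_combination hxk + k * k * hv
  · rw [dotProduct_vec3, hv₀]
    ring

lemma apply_vertex_eq_self_of_isotropic (hι : ι ^ 2 = -1) (hF : 9 < Fintype.card F)
    {a : Equiv.Perm (Involution PSL(2, F))} (ha : a ∈ graphAut (commGraph PSL(2, F)))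
    (hfix : ∀ v, (commGraph PSL(2, F)).dist (vertexT hι) v = 2 → a v = v)
    {v : Fin 3 → F} (hv : v ⬝ᵥ v = 1) (hiso : v 1 * v 1 + v 2 * v 2 = 0) (hv₁ : v 1 ≠ 0) :
    a (vertex hι hv) = vertex hι hv := by
  refine apply_vertex_eq_self_of_forall_exists_adj hι hF ha hfix hv fun x k _ hx _ ↦ ?_
  rw [vec3_dotProduct] at hv
  have hv₀ : v 0 * v 0 = 1 := by linear_combination hv - hiso
  -- `w = (x, (α + β) v₁, (α - β) v₂)`; since `v₂² = -v₁²`, only `β` enters `v ⬝ᵥ w`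
  set α := -((1 - x * x) * v 0) / (2 * x)
  set β := -(v 0 * x) / (2 * (v 1 * v 1))
  have hβ : 2 * β * (v 1 * v 1) = -(v 0 * x) := by simp only [β]; field_simp
  have hαβ : 4 * α * β * (v 1 * v 1) = (1 - x * x) * (v 0 * v 0) := by
    simp only [α, β]; field_simp; ring
  refine ⟨![x, (α + β) * v 1, (α - β) * v 2], ?_, rfl, ?_⟩
  · rw [vec3_dotProduct']
    linear_combination (α - β) ^ 2 * hiso + hαβ + (1 - x * x) * hv₀
  · rw [dotProduct_vec3]
    linear_combination hβ + (α - β) * hiso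

lemma apply_vertex_eq_self_of_anisotropic (hι : ι ^ 2 = -1) (hF : 9 < Fintype.card F)
    {a : Equiv.Perm (Involution PSL(2, F))} (ha : a ∈ graphAut (commGraph PSL(2, F)))
    (hfix : ∀ v, (commGraph PSL(2, F)).dist (vertexT hι) v = 2 → a v = v)
    {v : Fin 3 → F} (hv : v ⬝ᵥ v = 1) (hv₀ : v 0 ≠ 0) (hiso : v 1 * v 1 + v 2 * v 2 ≠ 0) :
    a (vertex hι hv) = vertex hι hv := by
  have hfac : (v 1 + ι * v 2) * (v 1 - ι * v 2) = v 1 * v 1 + v 2 * v 2 := by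
    linear_combination -(v 2 * v 2) * hι
  rw [← hfac, mul_ne_zero_iff] at hiso
  obtain ⟨hfac₁, hfac₂⟩ := hiso
  obtain ⟨c₁, hc₁e⟩ : ∃ c, c * (v 1 + ι * v 2) = -v 0 := ⟨_, div_mul_cancel₀ _ hfac₁⟩
  obtain ⟨c₂, hc₂e⟩ : ∃ c, c * (v 1 - ι * v 2) = -v 0 := ⟨_, div_mul_cancel₀ _ hfac₂⟩
  have hc₁ : c₁ ≠ 0 := left_ne_zero_of_mul (hc₁e ▸ neg_ne_zero.mpr hv₀)
  have hc₂ : c₂ ≠ 0 := left_ne_zero_of_mul (hc₂e ▸ neg_ne_zero.mpr hv₀)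
  have hiso₁ : c₁ * c₁ + c₁ * ι * (c₁ * ι) = 0 := by linear_combination c₁ * c₁ * hι
  have hiso₂ : c₂ * c₂ + -(c₂ * ι) * -(c₂ * ι) = 0 := by linear_combination c₂ * c₂ * hι
  have hu₁ : ![1, c₁, c₁ * ι] ⬝ᵥ ![1, c₁, c₁ * ι] = 1 := by
    rw [vec3_dotProduct']; linear_combination hiso₁
  have hu₂ : ![1, c₂, -(c₂ * ι)] ⬝ᵥ ![1, c₂, -(c₂ * ι)] = 1 := by
    rw [vec3_dotProduct']; linear_combination hiso₂
  refine apply_eq_self_of_adj_of_adj (commGraph_psl_eq_or_eq_of_adj hι) ha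
    (w := vertex hι hu₁) (w' := vertex hι hu₂) ?_ ?_ ?_
    (apply_vertex_eq_self_of_isotropic hι hF ha hfix hu₁ hiso₁ hc₁)
    (apply_vertex_eq_self_of_isotropic hι hF ha hfix hu₂ hiso₂ hc₂)
  · rw [Ne, vertex_eq_vertex_iff]
    rintro (h | h)
    · have h₁ := congrFun h 1
      have h₂ := congrFun h 2
      simp only [cons_val_zero, cons_val_one, cons_val_two, head_cons, tail_cons] at h₁ h₂
      exact mul_ne_zero (mul_ne_zero two_ne_zero hc₁) (ne_zero_of_sq_eq_neg_one hι)
        (by linear_combination h₂ + ι * h₁)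
    · have h₀ := congrFun h 0
      simp only [cons_val_zero, Pi.neg_apply] at h₀
      exact two_ne_zero (α := F) (by linear_combination h₀)
  · rw [vertex_adj_vertex_iff, dotProduct_vec3]
    linear_combination hc₁e
  · rw [vertex_adj_vertex_iff, dotProduct_vec3]
    linear_combination hc₂e

lemma apply_vertex_eq_self (hι : ι ^ 2 = -1) (hF : 9 < Fintype.card F)
    {a : Equiv.Perm (Involution PSL(2, F))} (ha : a ∈ graphAut (commGraph PSL(2, F)))
    (hat : a (vertexT hι) = vertexT hι)
    (hfix : ∀ v, (commGraph PSL(2, F)).dist (vertexT hι) v = 2 → a v = v)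
    {v : Fin 3 → F} (hv : v ⬝ᵥ v = 1) :
    a (vertex hι hv) = vertex hι hv := by
  by_cases hv₀ : v 0 = 0
  · exact apply_vertex_eq_self_of_apply_zero_eq_zero hι hF ha hfix hv hv₀
  by_cases hiso : v 1 * v 1 + v 2 * v 2 = 0
  · by_cases hv₁ : v 1 = 0
    · have hv₂ : v 2 = 0 := mul_self_eq_zero.mp (by simpa [hv₁] using hiso)
      rw [vertex_eq_vertexT hι hv hv₁ hv₂, hat]
    · exact apply_vertex_eq_self_of_isotropic hι hF ha hfix hv hiso hv₁
  · exact apply_vertex_eq_self_of_anisotropic hι hF ha hfix hv hv₀ hiso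

end Automorphism

/-- For `q ≡ 1 (mod 4)`, `q ≥ 17`, `t = diag(ι,-ι)` with `ι² = -1`, the stabilizer of `t` in
`Aut(C(L,X))` acts faithfully on the second disc `Δ₂(t)`: an automorphism fixing `t` and
fixing every vertex at distance `2` from `t` is the identity. -/
theorem stmt_13 (q : ℕ) (hq1 : q % 4 = 1) (hq17 : 17 ≤ q)
    (F : Type) [Field F] [Fintype F] (hF : Fintype.card F = q)
    (ι : F) (hι : ι ^ 2 = -1)
    (t : SpecialLinearGroup (Fin 2) F)
    (htm : (t : Matrix (Fin 2) (Fin 2) F) = !![ι, 0; 0, -ι])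
    (ht : ((t : PSL(2, F)) * (t : PSL(2, F)) = 1 ∧ (t : PSL(2, F)) ≠ 1))
    (a : Equiv.Perm {x : PSL(2, F) // x * x = 1 ∧ x ≠ 1})
    (ha : a ∈ graphAut (commGraph (PSL(2, F))))
    (hat : a ⟨(t : PSL(2, F)), ht⟩ = ⟨(t : PSL(2, F)), ht⟩)
    (hfix : ∀ v, (commGraph (PSL(2, F))).dist ⟨(t : PSL(2, F)), ht⟩ v = 2 → a v = v) :
    a = 1 := by
  have : NeZero (2 : F) := ⟨Ring.two_ne_zero fun h ↦ by
    have := FiniteField.even_card_iff_char_two.mp h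
    omega⟩
  have ht_eq : (⟨t, ht⟩ : Involution PSL(2, F)) = vertexT hι := by
    have ht_sl : t = slOfUnit hι e₀_dotProduct_e₀ :=
      Subtype.ext (by rw [htm, coe_slOfUnit, traceless_e₀])
    exact Subtype.ext (show (t : PSL(2, F)) = slOfUnit hι e₀_dotProduct_e₀ by rw [ht_sl])
  rw [ht_eq] at hat hfix
  ext v : 1
  obtain ⟨u, hu, rfl⟩ := exists_vertex_eq hι v
  exact apply_vertex_eq_self hι (by omega) ha hat hfix hu
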